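/- For a Catalan profile (ℓ_0, h_1, ℓ_1, …, h_r, ℓ_r) with r ≥ 1, one has C(ℓ_0,h_1,ℓ_1,…,h_r,ℓ_r) = ∑_{i=ξ}^{r-1} C(ℓ_0,h_1,ℓ_1,…,h_i,ℓ_i,h_{i+1}-1,ℓ_{i+1}-1,…,ℓ_{r-1}-1,h_r-1,ℓ_r) · (∑_{t=ℓ_i+1}^{h_{i+1}} [2t]_q), where ξ = max{ i : 0 ≤ i ≤ r-1, ℓ_i = 0 } and C(ℓ_0,h_1,…,h_r,ℓ_r) = (∏_i [h_i]_q! [h_i+1]_q!)/(∏_i [ℓ_i]_q! [ℓ_i+1]_q!). -/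

import Mathlib

open scoped Classical

inductive Letter | x | y
deriving DecidableEq

instance : Fintype Letter := ⟨{Letter.x, Letter.y}, fun a => by cases a <;> simp⟩

/-- x ↦ 1, y ↦ -1 -/
def bar : Letter → ℤ
  | .x => 1
  | .y => -1

/-- σ swaps the letters x and y. -/
def sigma : Letter → Letter
  | .x => .y
  | .y => .x

/-- the pairing ⟨u,v⟩ : 2 if u = v, -2 otherwise. -/
def pair : Letter → Letter → ℤ := fun u v => if u = v then 2 else -2

noncomputable section

/-- The free associative algebra on the two letters x, y (with its word basis). -/
abbrev V (F : Type*) [Field F] := MonoidAlgebra F (FreeMonoid Letter)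

variable {F : Type*} [Field F]

/-- the basis word of V corresponding to a list of letters -/
def wd (w : List Letter) : V F := MonoidAlgebra.single (FreeMonoid.ofList w) 1

/-- the q-shuffle product of two words, by the left recursion -/
def shuffleWord (q : F) : List Letter → List Letter → V F
  | [], v => wd v
  | u1 :: ut, [] => wd (u1 :: ut)
  | u1 :: ut, v1 :: vt =>
      wd [u1] * shuffleWord q ut (v1 :: vt)
      + q ^ (((u1 :: ut).map (fun a => pair a v1)).sum) •
          (wd [v1] * shuffleWord q (u1 :: ut) vt)
termination_by u v => u.length + v.length

/-- the q-shuffle product on V, extended bilinearly -/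
def shuffle (q : F) (a b : V F) : V F :=
  a.coeff.sum fun u cu => b.coeff.sum fun v cv =>
    (cu * cv) • shuffleWord q (FreeMonoid.toList u) (FreeMonoid.toList v)

/-- the quantum integer [m]_q -/
def qint (q : F) (m : ℤ) : F := (q ^ m - q ^ (-m)) / (q - q⁻¹)

/-- the quantum factorial [m]_q! -/
def qfac (q : F) (m : ℤ) : F := ∏ j ∈ Finset.range m.toNat, qint q ((j : ℤ) + 1)

/-- e_i = ā_1 + ⋯ + ā_i, the i-th elevation of the word w -/
def esum (w : List Letter) (i : ℕ) : ℤ := ((w.take i).map bar).sum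

/-- A word is Catalan when all partial sums of bar are nonnegative and the total is zero. -/
def IsCatalan (w : List Letter) : Prop :=
  (∀ i, i ≤ w.length → 0 ≤ esum w i) ∧ esum w w.length = 0

/-- the coefficient C(w) = ∏_{i=0}^{2n} [1 + e_i]_q -/
def Ccoef (q : F) (w : List Letter) : F :=
  ∏ i ∈ Finset.range (w.length + 1), qint q (1 + esum w i)

/-- the n-th Catalan element C_n = ∑_{w ∈ Cat_n} C(w) w  -/
def catalanElt (q : F) (n : ℕ) : V F :=
  ∑ f : Fin (2 * n) → Letter,
    if IsCatalan (List.ofFn f) then Ccoef q (List.ofFn f) • wd (List.ofFn f) else 0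

/-- the antiautomorphism ζ : reverse the word and swap x,y, extended linearly -/
def zeta (a : V F) : V F :=
  a.coeff.sum fun w c =>
    MonoidAlgebra.single (FreeMonoid.ofList (((FreeMonoid.toList w).map sigma).reverse)) c

/-- The profile of a word: delete from the elevation sequence every interior e_i
    such that e_{i+1}-e_i and e_i-e_{i-1} have the same sign. -/
def profile (w : List Letter) : List ℤ :=
  (List.range (w.length + 1)).filterMap fun i =>
    if i = 0 ∨ i = w.length then some (esum w i)
    else if 0 < (esum w (i + 1) - esum w i) * (esum w i - esum w (i - 1)) then none
    else some (esum w i)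

/-- The list (ℓ_0, h_1, ℓ_1, h_2, …, h_r, ℓ_r). -/
def P (r : ℕ) (ℓ h : ℕ → ℤ) : List ℤ :=
  List.ofFn fun i : Fin (2 * r + 1) =>
    if i.val % 2 = 0 then ℓ (i.val / 2) else h ((i.val + 1) / 2)

/-- the word x^{h_1} y^{h_1-ℓ_1} x^{h_2-ℓ_1} y^{h_2-ℓ_2} ⋯ x^{h_r-ℓ_{r-1}} y^{h_r} -/
def explicitWord (r : ℕ) (ℓ h : ℕ → ℤ) : List Letter :=
  (List.range r).flatMap fun i =>
    List.replicate (h (i + 1) - ℓ i).toNat Letter.x ++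
      List.replicate (h (i + 1) - ℓ (i + 1)).toNat Letter.y

/-- C(ℓ_0,h_1,…,h_r,ℓ_r), the ratio of q-factorials attached to a profile. -/
def Cprof (q : F) (r : ℕ) (ℓ h : ℕ → ℤ) : F :=
  (∏ i ∈ Finset.Icc 1 r, qfac q (h i) * qfac q (h i + 1)) /
    (∏ i ∈ Finset.range (r + 1), qfac q (ℓ i) * qfac q (ℓ i + 1))

end

/-!
Write `L_j = [ℓ_j]_q [ℓ_j + 1]_q` and `H_j = [h_j]_q [h_j + 1]_q`. Since
`[2t]_q = [t]_q [t+1]_q - [t-1]_q [t]_q`, the inner sum telescopes to `H_{i+1} - L_i`, and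
lowering every entry after position `i` by one divides `C` by `∏_{j>i} H_j / ∏_{i<j<r} L_j`.
With `g_i = ∏_{i≤j<r} L_j / ∏_{i<j≤r} H_j` the `i`-th summand becomes `C · (g_{i+1} - g_i)`,
so the sum telescopes to `C · (g_r - g_ξ) = C`, because `g_r = 1` and `L_ξ = [0]_q [1]_q = 0`.
-/

section QCombinatorics

open Finset

variable {F : Type*} [Field F]

def qintPair (q : F) (m : ℤ) : F := qint q m * qint q (m + 1)

lemma qint_zero (q : F) : qint q 0 = 0 := by simp [qint]

lemma qintPair_zero (q : F) : qintPair q 0 = 0 := by simp [qintPair, qint_zero]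

lemma sub_inv_ne_zero {q : F} (hq0 : q ≠ 0) (hq2 : q ^ 2 ≠ 1) : q - q⁻¹ ≠ 0 := fun h =>
  hq2 <| calc
    q ^ 2 = q * q := sq q
    _ = q * q⁻¹ := congrArg (q * ·) (sub_eq_zero.mp h)
    _ = 1 := mul_inv_cancel₀ hq0

lemma qint_ne_zero {q : F} (hq0 : q ≠ 0) (hq : ∀ k : ℕ, 0 < k → q ^ k ≠ 1)
    {m : ℤ} (hm : m ≠ 0) : qint q m ≠ 0 := by
  refine div_ne_zero (fun h => ?_) (sub_inv_ne_zero hq0 (hq 2 two_pos))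
  have h2m : q ^ (2 * m) = 1 := calc
    q ^ (2 * m) = q ^ m * q ^ m := by rw [two_mul, zpow_add₀ hq0]
    _ = q ^ m * q ^ (-m) := congrArg (q ^ m * ·) (sub_eq_zero.mp h)
    _ = 1 := by rw [← zpow_add₀ hq0, add_neg_cancel, zpow_zero]
  rcases Int.natAbs_eq (2 * m) with he | he
  · exact hq (2 * m).natAbs (by omega) (by rw [← zpow_natCast, ← he, h2m])
  · exact hq (2 * m).natAbs (by omega)
      (by rw [← zpow_natCast, ← inv_inj, ← zpow_neg, ← he, h2m, inv_one])

lemma qintPair_ne_zero {q : F} (hq0 : q ≠ 0) (hq : ∀ k : ℕ, 0 < k → q ^ k ≠ 1)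
    {m : ℤ} (hm : 0 < m) : qintPair q m ≠ 0 :=
  mul_ne_zero (qint_ne_zero hq0 hq hm.ne') (qint_ne_zero hq0 hq (by omega))

lemma qint_two_mul (q : F) (t : ℤ) : qint q (2 * t) = qintPair q t - qintPair q (t - 1) := by
  rcases eq_or_ne (q - q⁻¹) 0 with hd | hd
  · simp [qintPair, qint, hd]
  have hq0 : q ≠ 0 := by rintro rfl; simp at hd
  rw [two_mul]
  have ha : q ^ t ≠ 0 := zpow_ne_zero t hq0
  simp only [qintPair, qint, sub_add_cancel, zpow_neg, zpow_add₀ hq0, zpow_sub₀ hq0, zpow_one]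
  rw [div_mul_div_comm, div_mul_div_comm, ← sub_div, div_eq_div_iff hd (mul_ne_zero hd hd)]
  field_simp
  ring

lemma sum_qint_two_mul_Icc (q : F) {a b : ℤ} (hab : a ≤ b) :
    ∑ t ∈ Icc (a + 1) b, qint q (2 * t) = qintPair q b - qintPair q a := by
  induction b, hab using Int.leInduction with
  | base => simp
  | succ b hab ih =>
    rw [← insert_Icc_right_eq_Icc_add_one (by omega), sum_insert (by simp), ih,
      qint_two_mul, add_sub_cancel_right]
    ring

lemma qfac_succ (q : F) {m : ℤ} (hm : 0 ≤ m) : qfac q (m + 1) = qfac q m * qint q (m + 1) := by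
  rw [qfac, qfac, show (m + 1).toNat = m.toNat + 1 by omega, prod_range_succ,
    Int.toNat_of_nonneg hm]

lemma qfac_pred_mul_qintPair (q : F) {m : ℤ} (hm : 0 < m) :
    qfac q (m - 1) * qfac q (m - 1 + 1) * qintPair q m = qfac q m * qfac q (m + 1) := by
  have hpred := qfac_succ q (m := m - 1) (by omega)
  rw [sub_add_cancel] at hpred ⊢
  rw [qfac_succ q hm.le, hpred, qintPair]
  ring

lemma prod_qfac_pred_mul_prod_qintPair (q : F) {ι : Type*} {A S : Finset ι} (hS : S ⊆ A)
    {f f' : ι → ℤ} (hpos : ∀ j ∈ S, 0 < f j) (hpred : ∀ j ∈ S, f' j = f j - 1)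
    (hrest : ∀ j ∈ A, j ∉ S → f' j = f j) :
    (∏ j ∈ A, qfac q (f' j) * qfac q (f' j + 1)) * ∏ j ∈ S, qintPair q (f j)
      = ∏ j ∈ A, qfac q (f j) * qfac q (f j + 1) := by
  rw [← inter_eq_right.mpr hS, ← prod_ite_mem, ← prod_mul_distrib]
  refine prod_congr rfl fun j hj => ?_
  by_cases hjS : j ∈ S
  · rw [if_pos hjS, hpred j hjS, qfac_pred_mul_qintPair q (hpos j hjS)]
  · rw [if_neg hjS, mul_one, hrest j hj hjS]

lemma Cprof_decrement_tail {q : F} (hq0 : q ≠ 0) (hq : ∀ k : ℕ, 0 < k → q ^ k ≠ 1) (r i : ℕ)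
    {ℓ h : ℕ → ℤ} (hh : ∀ j, i < j → j ≤ r → 0 < h j) (hℓ : ∀ j, i < j → j < r → 0 < ℓ j) :
    Cprof q r (fun j => if j ≤ i then ℓ j else if j = r then ℓ r else ℓ j - 1)
        (fun j => if j ≤ i then h j else h j - 1)
      = Cprof q r ℓ h * (∏ j ∈ Ico (i + 1) r, qintPair q (ℓ j))
          / ∏ j ∈ Ico (i + 1) (r + 1), qintPair q (h j) := by
  have hH : ∏ j ∈ Ico (i + 1) (r + 1), qintPair q (h j) ≠ 0 :=
    prod_ne_zero_iff.mpr fun j hj => by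
      rw [mem_Ico] at hj
      exact qintPair_ne_zero hq0 hq (hh j (by omega) (by omega))
  have hL : ∏ j ∈ Ico (i + 1) r, qintPair q (ℓ j) ≠ 0 :=
    prod_ne_zero_iff.mpr fun j hj => by
      rw [mem_Ico] at hj
      exact qintPair_ne_zero hq0 hq (hℓ j (by omega) (by omega))
  have hnum := prod_qfac_pred_mul_prod_qintPair q (A := Icc 1 r)
    (S := Ico (i + 1) (r + 1)) (f := h) (f' := fun j => if j ≤ i then h j else h j - 1)
    (fun j hj => by simp only [mem_Ico, mem_Icc] at hj ⊢; omega)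
    (fun j hj => by rw [mem_Ico] at hj; exact hh j (by omega) (by omega))
    (fun j hj => by rw [mem_Ico] at hj; rw [if_neg (by omega)])
    (fun j hj hjS => by
      simp only [mem_Ico, mem_Icc] at hj hjS; rw [if_pos (by omega)])
  have hden := prod_qfac_pred_mul_prod_qintPair q (A := range (r + 1))
    (S := Ico (i + 1) r) (f := ℓ)
    (f' := fun j => if j ≤ i then ℓ j else if j = r then ℓ r else ℓ j - 1)
    (fun j hj => by simp only [mem_Ico, mem_range] at hj ⊢; omega)
    (fun j hj => by rw [mem_Ico] at hj; exact hℓ j (by omega) (by omega))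
    (fun j hj => by rw [mem_Ico] at hj; rw [if_neg (by omega), if_neg (by omega)])
    (fun j hj hjS => by
      simp only [mem_Ico, mem_range] at hj hjS
      split_ifs with h1 h2 <;> first | rfl | (subst h2; rfl) | omega)
  rw [Cprof, Cprof, ← hnum, ← hden]
  field_simp

lemma sum_Ico_prod_div_mul_sub (L H : ℕ → F) {a r : ℕ} (har : a ≤ r)
    (hH : ∀ j ∈ Ico (a + 1) (r + 1), H j ≠ 0) :
    ∑ i ∈ Ico a r, (∏ j ∈ Ico (i + 1) r, L j)
        / (∏ j ∈ Ico (i + 1) (r + 1), H j) * (H (i + 1) - L i)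
      = 1 - (∏ j ∈ Ico a r, L j) / ∏ j ∈ Ico (a + 1) (r + 1), H j := by
  set g : ℕ → F := fun i => (∏ j ∈ Ico i r, L j) / ∏ j ∈ Ico (i + 1) (r + 1), H j
  have hg : g r = 1 := by simp [g]
  rw [← hg, ← sum_Ico_sub g har]
  refine sum_congr rfl fun i hi => ?_
  rw [mem_Ico] at hi
  have hHi : H (i + 1) ≠ 0 := hH (i + 1) (by simp; omega)
  have hPH : ∏ j ∈ Ico (i + 2) (r + 1), H j ≠ 0 :=
    prod_ne_zero_iff.mpr fun j hj => hH j (by simp at hj ⊢; omega)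
  simp only [g]
  rw [prod_eq_prod_Ico_succ_bot (by omega : i < r),
    prod_eq_prod_Ico_succ_bot (by omega : i + 1 < r + 1)]
  field_simp

end QCombinatorics

theorem stmt15_general {F : Type*} [Field F] (q : F) (hq0 : q ≠ 0)
    (hq : ∀ k : ℕ, 0 < k → q ^ k ≠ 1) (r : ℕ) (hr : 1 ≤ r) (ℓ h : ℕ → ℤ)
    (h0 : ℓ 0 = 0) (hℓr : ℓ r = 0) (hℓ : ∀ i, 1 ≤ i → i + 1 ≤ r → 0 ≤ ℓ i)
    (hlh : ∀ i, 1 ≤ i → i ≤ r → ℓ (i - 1) < h i)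
    (ξ : ℕ) (hξ1 : ξ ≤ r - 1) (hξ2 : ℓ ξ = 0)
    (hξ3 : ∀ j, j ≤ r - 1 → ℓ j = 0 → j ≤ ξ) :
    Cprof q r ℓ h =
      ∑ i ∈ Finset.Icc ξ (r - 1),
        Cprof q r (fun j => if j ≤ i then ℓ j else if j = r then ℓ r else ℓ j - 1)
          (fun j => if j ≤ i then h j else h j - 1)
        * ∑ t ∈ Finset.Icc (ℓ i + 1) (h (i + 1)), qint q (2 * t) := by
  have hℓ_nonneg : ∀ j ≤ r, 0 ≤ ℓ j := fun j hj => by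
    rcases Nat.eq_zero_or_pos j with rfl | hj0
    · exact h0.ge
    rcases hj.eq_or_lt with rfl | hjr
    · exact hℓr.ge
    exact hℓ j hj0 hjr
  have hh_pos : ∀ j, 1 ≤ j → j ≤ r → 0 < h j := fun j hj1 hjr =>
    (hℓ_nonneg (j - 1) (by omega)).trans_lt (hlh j hj1 hjr)
  have hℓ_pos : ∀ j, ξ < j → j < r → 0 < ℓ j := fun j hξj hjr =>
    (hℓ_nonneg j hjr.le).lt_of_ne fun hℓj => by have := hξ3 j (by omega) hℓj.symm; omega
  rw [show Finset.Icc ξ (r - 1) = Finset.Ico ξ r by ext; simp; omega]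
  calc Cprof q r ℓ h = Cprof q r ℓ h * (1 - (∏ j ∈ Finset.Ico ξ r, qintPair q (ℓ j))
        / ∏ j ∈ Finset.Ico (ξ + 1) (r + 1), qintPair q (h j)) := by
        rw [Finset.prod_eq_zero (Finset.mem_Ico.mpr ⟨le_rfl, by omega⟩)
          (by rw [hξ2, qintPair_zero]), zero_div, sub_zero, mul_one]
    _ = _ := by
      rw [← sum_Ico_prod_div_mul_sub _ _ (by omega) fun j hj => by
        rw [Finset.mem_Ico] at hj; exact qintPair_ne_zero hq0 hq (hh_pos j (by omega) (by omega)),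
        Finset.mul_sum]
      refine Finset.sum_congr rfl fun i hi => ?_
      rw [Finset.mem_Ico] at hi
      have hℓh : ℓ i ≤ h (i + 1) := (hlh (i + 1) (by omega) (by omega)).le
      rw [Cprof_decrement_tail hq0 hq r i (fun j _ _ => hh_pos j (by omega) (by omega))
        (fun j _ _ => hℓ_pos j (by omega) (by omega)), sum_qint_two_mul_Icc q hℓh, mul_div_assoc,
        mul_assoc]

theorem stmt15 {F : Type*} [Field F] (q : F) (hq0 : q ≠ 0)
    (hq : ∀ k : ℕ, 0 < k → q ^ k ≠ 1) (r : ℕ) (hr : 1 ≤ r) (ℓ h : ℕ → ℤ)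
    (h0 : ℓ 0 = 0) (hℓr : ℓ r = 0) (hℓ : ∀ i, 1 ≤ i → i + 1 ≤ r → 0 ≤ ℓ i)
    (hlh : ∀ i, 1 ≤ i → i ≤ r → ℓ (i - 1) < h i)
    (hhl : ∀ i, 1 ≤ i → i ≤ r → ℓ i < h i)
    (ξ : ℕ) (hξ1 : ξ ≤ r - 1) (hξ2 : ℓ ξ = 0)
    (hξ3 : ∀ j, j ≤ r - 1 → ℓ j = 0 → j ≤ ξ) :
    Cprof q r ℓ h =
      ∑ i ∈ Finset.Icc ξ (r - 1),
        Cprof q r (fun j => if j ≤ i then ℓ j else if j = r then ℓ r else ℓ j - 1)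
          (fun j => if j ≤ i then h j else h j - 1)
        * ∑ t ∈ Finset.Icc (ℓ i + 1) (h (i + 1)), qint q (2 * t) :=
  stmt15_general q hq0 hq r hr ℓ h h0 hℓr hℓ hlh ξ hξ1 hξ2 hξ3
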